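/- (Diagonal-sum identity.) Let n ≥ 1 and let A, U, S, V : ℝ → M_n(ℂ) be differentiable at t₀ ∈ ℝ with A(t) = U(t) S(t) V(t)* for all t in a neighborhood of t₀, where U(t) and V(t) are unitary and S(t) is diagonal with real entries s_1(t), …, s_n(t). Set Ã = U(t₀)* A'(t₀) V(t₀), where ' denotes the derivative at t₀ and * the conjugate transpose, and write s_i = s_i(t₀). Then for every i with s_i ≠ 0: (U(t₀)* U'(t₀))_{ii} + conj((V(t₀)* V'(t₀))_{ii}) = (Ã_{ii} − conj(Ã_{ii})) / (2·s_i) = i·Im(Ã_{ii})/s_i. -/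

import Mathlib

/-!
Differentiating `A = U S Vᴴ` at `t₀` and conjugating by the unitaries gives
`Ã = (UᴴU') S + S' + S (VᴴV')ᴴ`. Since `U` and `V` stay unitary, `UᴴU'` and `VᴴV'` are
skew-Hermitian, so their diagonal entries are purely imaginary, while `S'` is real. Hence
`Ãᵢᵢ - conj Ãᵢᵢ` loses the `S'` term and doubles the rest: it equals
`2 sᵢ ((UᴴU')ᵢᵢ + conj (VᴴV')ᵢᵢ)`.
-/

open Matrix

def HasEntrywiseDerivAt {𝕜 𝔸 m n : Type*} [NontriviallyNormedField 𝕜] [NormedAddCommGroup 𝔸]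
    [NormedSpace 𝕜 𝔸] (M : 𝕜 → Matrix m n 𝔸) (M' : Matrix m n 𝔸) (x : 𝕜) : Prop :=
  ∀ i j, HasDerivAt (fun t => M t i j) (M' i j) x

namespace HasEntrywiseDerivAt

section

variable {𝕜 𝔸 l m n : Type*} [NontriviallyNormedField 𝕜] {x : 𝕜}

section AddGroup

variable [NormedAddCommGroup 𝔸] [NormedSpace 𝕜 𝔸] {M N : 𝕜 → Matrix m n 𝔸} {M' N' : Matrix m n 𝔸}

theorem const (M : Matrix m n 𝔸) : HasEntrywiseDerivAt (fun _ => M) 0 x :=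
  fun _ _ => hasDerivAt_const _ _

theorem congr_of_eventuallyEq (hM : HasEntrywiseDerivAt M M' x) (h : N =ᶠ[nhds x] M) :
    HasEntrywiseDerivAt N M' x :=
  fun i j => (hM i j).congr_of_eventuallyEq (h.mono fun _ ht => congrFun₂ ht i j)

theorem unique (hM : HasEntrywiseDerivAt M M' x) (hN : HasEntrywiseDerivAt M N' x) : M' = N' :=
  Matrix.ext fun i j => (hM i j).unique (hN i j)

theorem diagonal [DecidableEq n] {d : 𝕜 → n → 𝔸} {d' : n → 𝔸}
    (hd : ∀ i, HasDerivAt (fun t => d t i) (d' i) x) :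
    HasEntrywiseDerivAt (fun t => Matrix.diagonal (d t)) (Matrix.diagonal d') x := by
  intro i j
  rcases eq_or_ne i j with rfl | hij
  · simpa only [diagonal_apply_eq] using hd i
  · simpa only [diagonal_apply_ne _ hij] using hasDerivAt_const x (0 : 𝔸)

end AddGroup

theorem mul [NormedRing 𝔸] [NormedAlgebra 𝕜 𝔸] [Fintype m] {M : 𝕜 → Matrix l m 𝔸}
    {N : 𝕜 → Matrix m n 𝔸} {M' : Matrix l m 𝔸} {N' : Matrix m n 𝔸}
    (hM : HasEntrywiseDerivAt M M' x) (hN : HasEntrywiseDerivAt N N' x) :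
    HasEntrywiseDerivAt (fun t => M t * N t) (M' * N x + M x * N') x := by
  intro i j
  simp only [mul_apply, Matrix.add_apply, ← Finset.sum_add_distrib]
  exact HasDerivAt.fun_sum fun k _ => (hM i k).mul (hN k j)

theorem conjTranspose [StarRing 𝕜] [TrivialStar 𝕜] [NormedAddCommGroup 𝔸] [NormedSpace 𝕜 𝔸]
    [StarAddMonoid 𝔸] [StarModule 𝕜 𝔸] [ContinuousStar 𝔸] {M : 𝕜 → Matrix m n 𝔸}
    {M' : Matrix m n 𝔸} (hM : HasEntrywiseDerivAt M M' x) :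
    HasEntrywiseDerivAt (fun t => (M t)ᴴ) M'ᴴ x :=
  fun i j => (hM j i).star

end

theorem mem_skewAdjoint_of_unitary {𝔸 n : Type*} [NormedCommRing 𝔸] [NormedAlgebra ℝ 𝔸]
    [StarRing 𝔸] [StarModule ℝ 𝔸] [ContinuousStar 𝔸] [Fintype n] [DecidableEq n]
    {W : ℝ → Matrix n n 𝔸} {W' : Matrix n n 𝔸} {x : ℝ} (hW : HasEntrywiseDerivAt W W' x)
    (hWu : ∀ᶠ t in nhds x, W t ∈ unitaryGroup n 𝔸) :
    (W x)ᴴ * W' ∈ skewAdjoint (Matrix n n 𝔸) := by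
  have hOne : HasEntrywiseDerivAt (fun t => (W t)ᴴ * W t) 0 x :=
    (const 1).congr_of_eventuallyEq <| hWu.mono fun t ht => mem_unitaryGroup_iff'.mp ht
  have hsum : W'ᴴ * W x + (W x)ᴴ * W' = 0 := hW.conjTranspose.mul hW |>.unique hOne
  rw [skewAdjoint.mem_iff, star_eq_conjTranspose, conjTranspose_mul, conjTranspose_conjTranspose]
  exact eq_neg_of_add_eq_zero_left hsum

end HasEntrywiseDerivAt

theorem Matrix.star_apply_self_of_mem_skewAdjoint {α n : Type*} [AddCommGroup α]
    [StarAddMonoid α] {M : Matrix n n α} (hM : M ∈ skewAdjoint (Matrix n n α)) (i : n) :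
    star (M i i) = -M i i := by
  have hM' : Mᴴ = -M := by rw [← star_eq_conjTranspose, ← skewAdjoint.mem_iff]; exact hM
  exact congrFun₂ hM' i i

theorem conjTranspose_mul_svd_deriv_mul {R n : Type*} [CommRing R] [StarRing R] [Fintype n]
    [DecidableEq n] {U₀ V₀ U' V' D D' : Matrix n n R} (hU₀ : U₀ᴴ * U₀ = 1) (hV₀ : V₀ᴴ * V₀ = 1) :
    U₀ᴴ * ((U' * D + U₀ * D') * V₀ᴴ + U₀ * D * V'ᴴ) * V₀ =
      U₀ᴴ * U' * D + D' + D * (V₀ᴴ * V')ᴴ := by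
  have hU₀' : ∀ X : Matrix n n R, U₀ᴴ * (U₀ * X) = X := fun X => by
    rw [← Matrix.mul_assoc, hU₀, Matrix.one_mul]
  rw [conjTranspose_mul, conjTranspose_conjTranspose]
  simp only [Matrix.mul_add, Matrix.add_mul, Matrix.mul_assoc, hV₀, Matrix.mul_one, hU₀']

theorem Complex.sub_conj_div_two_mul (z a : ℂ) :
    (z - starRingEnd ℂ z) / (2 * a) = Complex.I * (z.im : ℂ) / a := by
  rw [Complex.sub_conj]
  push_cast
  rw [mul_assoc, mul_div_mul_left _ _ two_ne_zero, mul_comm]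

theorem Complex.sub_conj_of_star_eq_neg {α β : ℂ} (a r : ℝ) (hα : star α = -α)
    (hβ : star β = -β) :
    α * a + r + a * starRingEnd ℂ β - starRingEnd ℂ (α * a + r + a * starRingEnd ℂ β) =
      2 * a * (α + starRingEnd ℂ β) := by
  have hα' : starRingEnd ℂ α = -α := hα
  have hβ' : starRingEnd ℂ β = -β := hβ
  simp only [map_add, map_mul, Complex.conj_conj, Complex.conj_ofReal, hα']
  linear_combination (-a : ℂ) * hβ'

theorem diagonal_sum_identity_general (n : ℕ)
    (A U V : ℝ → Matrix (Fin n) (Fin n) ℂ) (s : Fin n → ℝ) (sf : Fin n → ℝ → ℝ) (t₀ : ℝ)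
    (A' U' V' : Matrix (Fin n) (Fin n) ℂ) (s' : Fin n → ℝ)
    (Atil : Matrix (Fin n) (Fin n) ℂ)
    (hA' : ∀ i j, HasDerivAt (fun t => A t i j) (A' i j) t₀)
    (hU' : ∀ i j, HasDerivAt (fun t => U t i j) (U' i j) t₀)
    (hV' : ∀ i j, HasDerivAt (fun t => V t i j) (V' i j) t₀)
    (hs' : ∀ i, HasDerivAt (sf i) (s' i) t₀)
    (hs : ∀ i, sf i t₀ = s i)
    (hU : ∀ᶠ t in nhds t₀, U t ∈ Matrix.unitaryGroup (Fin n) ℂ)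
    (hV : ∀ᶠ t in nhds t₀, V t ∈ Matrix.unitaryGroup (Fin n) ℂ)
    (hSVD : ∀ᶠ t in nhds t₀,
      A t = U t * Matrix.diagonal (fun i => ((sf i t : ℝ) : ℂ)) * (V t)ᴴ)
    (hAtil : Atil = (U t₀)ᴴ * A' * V t₀) :
    ∀ i, s i ≠ 0 →
      ((((U t₀)ᴴ * U') i i + starRingEnd ℂ (((V t₀)ᴴ * V') i i)
          = (Atil i i - starRingEnd ℂ (Atil i i)) / (2 * ((s i : ℝ) : ℂ))) ∧
        (Atil i i - starRingEnd ℂ (Atil i i)) / (2 * ((s i : ℝ) : ℂ))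
          = Complex.I * (((Atil i i).im : ℝ) : ℂ) / ((s i : ℝ) : ℂ)) := by
  intro i hsi
  set D := diagonal fun k => ((s k : ℝ) : ℂ)
  have hS : HasEntrywiseDerivAt (fun t => diagonal fun k => ((sf k t : ℝ) : ℂ))
      (diagonal fun k => ((s' k : ℝ) : ℂ)) t₀ :=
    .diagonal fun k => (hs' k).ofReal_comp
  have hA'_eq : A' = (U' * D + U t₀ * diagonal fun k => ((s' k : ℝ) : ℂ)) * (V t₀)ᴴ
      + U t₀ * D * V'ᴴ := by
    have hprod := ((HasEntrywiseDerivAt.mul hU' hS).mul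
      (HasEntrywiseDerivAt.conjTranspose hV')).congr_of_eventuallyEq hSVD
    simpa only [hs] using HasEntrywiseDerivAt.unique hA' hprod
  have hAtil_ii : Atil i i = ((U t₀)ᴴ * U') i i * s i + s' i
      + s i * starRingEnd ℂ (((V t₀)ᴴ * V') i i) := by
    rw [hAtil, hA'_eq, conjTranspose_mul_svd_deriv_mul (mem_unitaryGroup_iff'.mp hU.self_of_nhds)
      (mem_unitaryGroup_iff'.mp hV.self_of_nhds)]
    simp only [D, Matrix.add_apply, mul_diagonal, diagonal_mul, diagonal_apply_eq,
      conjTranspose_apply, starRingEnd_apply]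
  have hUskew := star_apply_self_of_mem_skewAdjoint
    (HasEntrywiseDerivAt.mem_skewAdjoint_of_unitary hU' hU) i
  have hVskew := star_apply_self_of_mem_skewAdjoint
    (HasEntrywiseDerivAt.mem_skewAdjoint_of_unitary hV' hV) i
  refine ⟨?_, Complex.sub_conj_div_two_mul _ _⟩
  rw [hAtil_ii, Complex.sub_conj_of_star_eq_neg _ _ hUskew hVskew, mul_div_cancel_left₀]
  exact mul_ne_zero two_ne_zero (Complex.ofReal_ne_zero.mpr hsi)

/-- **Diagonal-sum identity.** Along a differentiable SVD path `A(t) = U(t) S(t) V(t)ᴴ` with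
`U, V` unitary and `S = diagonal (s₁,…,sₙ)` real, for every `i` with `sᵢ ≠ 0`:
`(U(t₀)ᴴ U'(t₀))ᵢᵢ + conj (V(t₀)ᴴ V'(t₀))ᵢᵢ = (Ãᵢᵢ − conj Ãᵢᵢ)/(2 sᵢ) = i · Im Ãᵢᵢ / sᵢ`,
where `Ã = U(t₀)ᴴ A'(t₀) V(t₀)`. -/
theorem diagonal_sum_identity (n : ℕ) (hn : 1 ≤ n)
    (A U V : ℝ → Matrix (Fin n) (Fin n) ℂ) (s : Fin n → ℝ) (sf : Fin n → ℝ → ℝ) (t₀ : ℝ)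
    (A' U' V' : Matrix (Fin n) (Fin n) ℂ) (s' : Fin n → ℝ)
    (Atil : Matrix (Fin n) (Fin n) ℂ)
    (hA' : ∀ i j, HasDerivAt (fun t => A t i j) (A' i j) t₀)
    (hU' : ∀ i j, HasDerivAt (fun t => U t i j) (U' i j) t₀)
    (hV' : ∀ i j, HasDerivAt (fun t => V t i j) (V' i j) t₀)
    (hs' : ∀ i, HasDerivAt (sf i) (s' i) t₀)
    (hs : ∀ i, sf i t₀ = s i)
    (hU : ∀ᶠ t in nhds t₀, U t ∈ Matrix.unitaryGroup (Fin n) ℂ)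
    (hV : ∀ᶠ t in nhds t₀, V t ∈ Matrix.unitaryGroup (Fin n) ℂ)
    (hSVD : ∀ᶠ t in nhds t₀,
      A t = U t * Matrix.diagonal (fun i => ((sf i t : ℝ) : ℂ)) * (V t)ᴴ)
    (hAtil : Atil = (U t₀)ᴴ * A' * V t₀) :
    ∀ i, s i ≠ 0 →
      ((((U t₀)ᴴ * U') i i + starRingEnd ℂ (((V t₀)ᴴ * V') i i)
          = (Atil i i - starRingEnd ℂ (Atil i i)) / (2 * ((s i : ℝ) : ℂ))) ∧
        (Atil i i - starRingEnd ℂ (Atil i i)) / (2 * ((s i : ℝ) : ℂ))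
          = Complex.I * (((Atil i i).im : ℝ) : ℂ) / ((s i : ℝ) : ℂ)) :=
  diagonal_sum_identity_general n A U V s sf t₀ A' U' V' s' Atil hA' hU' hV' hs' hs hU hV hSVD hAtil
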